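/- Let u, χ, χ̂ : ℝ³ → ℝ be smooth (C^∞) functions of (t,x,y) with u_y nowhere zero. Suppose u satisfies the 3D rdDym equation u_ty = u_x·u_xy − u_y·u_xx, χ satisfies the linearized equation χ_ty − u_x·χ_xy + u_y·χ_xx − u_xy·χ_x + u_xx·χ_y = 0, and χ̂ satisfies the recursion system χ̂_t = u_y⁻¹·(u_y·χ_x − u_x·χ_y + (u_x·u_xy − u_y·u_xx)·χ̂) and χ̂_x = u_y⁻¹·(u_xy·χ̂ − χ_y) at every point. Then χ̂ also satisfies the linearized equation χ̂_ty − u_x·χ̂_xy + u_y·χ̂_xx − u_xy·χ̂_x + u_xx·χ̂_y = 0 everywhere. (That is, the recursion operator R₊ maps solutions of the linearized equation to solutions of the linearized equation.) -/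

import Mathlib

noncomputable section

/-- Partial derivative with respect to the first coordinate `t`. -/
def pt (u : ℝ × ℝ × ℝ → ℝ) : ℝ × ℝ × ℝ → ℝ :=
  fun p => deriv (fun s => u (s, p.2.1, p.2.2)) p.1

/-- Partial derivative with respect to the second coordinate `x`. -/
def px (u : ℝ × ℝ × ℝ → ℝ) : ℝ × ℝ × ℝ → ℝ :=
  fun p => deriv (fun s => u (p.1, s, p.2.2)) p.2.1

/-- Partial derivative with respect to the third coordinate `y`. -/
def py (u : ℝ × ℝ × ℝ → ℝ) : ℝ × ℝ × ℝ → ℝ :=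
  fun p => deriv (fun s => u (p.1, p.2.1, s)) p.2.2

section Helpers

lemma hasDerivAt_lineX (p : ℝ × ℝ × ℝ) (s : ℝ) :
    HasDerivAt (fun s : ℝ => ((p.1, s, p.2.2) : ℝ × ℝ × ℝ)) ((0:ℝ), (1:ℝ), (0:ℝ)) s :=
  HasDerivAt.prodMk (hasDerivAt_const _ _) (HasDerivAt.prodMk (hasDerivAt_id s) (hasDerivAt_const _ _))

lemma hasDerivAt_lineY (p : ℝ × ℝ × ℝ) (s : ℝ) :
    HasDerivAt (fun s : ℝ => ((p.1, p.2.1, s) : ℝ × ℝ × ℝ)) ((0:ℝ), (0:ℝ), (1:ℝ)) s :=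
  HasDerivAt.prodMk (hasDerivAt_const _ _) (HasDerivAt.prodMk (hasDerivAt_const _ _) (hasDerivAt_id s))

lemma px_eq_fderiv {f : ℝ × ℝ × ℝ → ℝ} (hf : Differentiable ℝ f) (p : ℝ × ℝ × ℝ) :
    px f p = fderiv ℝ f p (0, 1, 0) :=
  HasDerivAt.deriv (((hf p).hasFDerivAt).comp_hasDerivAt _ (hasDerivAt_lineX p p.2.1))

lemma py_eq_fderiv {f : ℝ × ℝ × ℝ → ℝ} (hf : Differentiable ℝ f) (p : ℝ × ℝ × ℝ) :
    py f p = fderiv ℝ f p (0, 0, 1) :=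
  HasDerivAt.deriv (((hf p).hasFDerivAt).comp_hasDerivAt _ (hasDerivAt_lineY p p.2.2))

-- smoothness of partials
lemma contDiff_fderiv_apply {f : ℝ × ℝ × ℝ → ℝ} (hf : ContDiff ℝ (⊤ : ℕ∞) f) (v : ℝ × ℝ × ℝ) :
    ContDiff ℝ (⊤ : ℕ∞) (fun p => fderiv ℝ f p v) := by
  exact (ContinuousLinearMap.apply ℝ ℝ v).contDiff.comp (hf.fderiv_right (by simp))

lemma px_eq' {f : ℝ × ℝ × ℝ → ℝ} (hf : ContDiff ℝ (⊤ : ℕ∞) f) :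
    px f = fun p => fderiv ℝ f p (0,1,0) :=
  funext fun p => px_eq_fderiv (hf.differentiable (by simp)) p
lemma py_eq' {f : ℝ × ℝ × ℝ → ℝ} (hf : ContDiff ℝ (⊤ : ℕ∞) f) :
    py f = fun p => fderiv ℝ f p (0,0,1) :=
  funext fun p => py_eq_fderiv (hf.differentiable (by simp)) p

lemma contDiff_px {f : ℝ × ℝ × ℝ → ℝ} (hf : ContDiff ℝ (⊤ : ℕ∞) f) : ContDiff ℝ (⊤ : ℕ∞) (px f) := by
  rw [px_eq' hf]; exact contDiff_fderiv_apply hf _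
lemma contDiff_py {f : ℝ × ℝ × ℝ → ℝ} (hf : ContDiff ℝ (⊤ : ℕ∞) f) : ContDiff ℝ (⊤ : ℕ∞) (py f) := by
  rw [py_eq' hf]; exact contDiff_fderiv_apply hf _

-- derivative of a directional derivative: p(v-direction) of (w-directional derivative)
lemma fderiv_dir {f : ℝ × ℝ × ℝ → ℝ} (hf : ContDiff ℝ (⊤ : ℕ∞) f) (w v p) :
    fderiv ℝ (fun q => fderiv ℝ f q w) p v = fderiv ℝ (fderiv ℝ f) p v w := by
  have h : (fun q => fderiv ℝ f q w) = (ContinuousLinearMap.apply ℝ ℝ w) ∘ (fderiv ℝ f) := rfl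
  rw [h, fderiv_comp p ((ContinuousLinearMap.apply ℝ ℝ w).differentiableAt)
    ((hf.fderiv_right (m := ((⊤ : ℕ∞) : WithTop ℕ∞)) (by exact_mod_cast le_top)).differentiable (by simp) p)]
  simp

-- Clairaut for px/py combos
lemma symm2 {f : ℝ × ℝ × ℝ → ℝ} (hf : ContDiff ℝ (⊤ : ℕ∞) f) (v w p) :
    fderiv ℝ (fderiv ℝ f) p v w = fderiv ℝ (fderiv ℝ f) p w v :=
  (hf.contDiffAt.isSymmSndFDerivAt (by rw [minSmoothness_of_isRCLikeNormedField]; exact WithTop.coe_le_coe.mpr (le_top : (2:ℕ∞) ≤ ⊤))) v w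

lemma px_py_comm {f : ℝ × ℝ × ℝ → ℝ} (hf : ContDiff ℝ (⊤ : ℕ∞) f) (p) :
    px (py f) p = py (px f) p := by
  rw [py_eq' hf, px_eq' hf,
    px_eq_fderiv ((contDiff_fderiv_apply hf _).differentiable (by simp)) p,
    py_eq_fderiv ((contDiff_fderiv_apply hf _).differentiable (by simp)) p,
    fderiv_dir hf _ _ p, fderiv_dir hf _ _ p, symm2 hf]

lemma sliceY {f : ℝ × ℝ × ℝ → ℝ} (hf : ContDiff ℝ (⊤ : ℕ∞) f) (p : ℝ × ℝ × ℝ) :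
    HasDerivAt (fun s => f (p.1, p.2.1, s)) (py f p) p.2.2 := by
  rw [py_eq_fderiv (hf.differentiable (by simp))]
  exact ((hf.differentiable (by simp) p).hasFDerivAt).comp_hasDerivAt _ (hasDerivAt_lineY p p.2.2)

lemma sliceX {f : ℝ × ℝ × ℝ → ℝ} (hf : ContDiff ℝ (⊤ : ℕ∞) f) (p : ℝ × ℝ × ℝ) :
    HasDerivAt (fun s => f (p.1, s, p.2.2)) (px f p) p.2.1 := by
  rw [px_eq_fderiv (hf.differentiable (by simp))]
  exact ((hf.differentiable (by simp) p).hasFDerivAt).comp_hasDerivAt _ (hasDerivAt_lineX p p.2.1)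

end Helpers

/-- The 3D rdDym equation `u_ty = u_x·u_xy − u_y·u_xx`. -/
def rdDym (u : ℝ × ℝ × ℝ → ℝ) : Prop :=
  ∀ p, py (pt u) p = px u p * py (px u) p - py u p * px (px u) p

/-- The linearization `ℓ(v) = v_ty − u_x·v_xy + u_y·v_xx − u_xy·v_x + u_xx·v_y = 0`
of the rdDym equation along `u`. -/
def linearized (u v : ℝ × ℝ × ℝ → ℝ) : Prop :=
  ∀ p, py (pt v) p - px u p * py (px v) p + py u p * px (px v) p
      - py (px u) p * px v p + px (px u) p * py v p = 0

/-- the recursion operator `R₊` maps solutions of the linearized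
rdDym equation to solutions of the linearized equation. -/
theorem recursion_operator_preserves_linearized (u χ χhat : ℝ × ℝ × ℝ → ℝ)
    (hu : ContDiff ℝ (⊤ : ℕ∞) u) (hχ : ContDiff ℝ (⊤ : ℕ∞) χ) (hχhat : ContDiff ℝ (⊤ : ℕ∞) χhat)
    (huy : ∀ p, py u p ≠ 0) (heq : rdDym u)
    (hlin : linearized u χ)
    (hrt : ∀ p, pt χhat p = (py u p)⁻¹ *
      (py u p * px χ p - px u p * py χ p
        + (px u p * py (px u) p - py u p * px (px u) p) * χhat p))
    (hrx : ∀ p, px χhat p = (py u p)⁻¹ * (py (px u) p * χhat p - py χ p)) :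
    linearized u χhat := by
  intro p
  have A1 := sliceY (contDiff_py hu) p
  have A2 := sliceY (contDiff_px hu) p
  have A3 := sliceY (contDiff_px hχ) p
  have A4 := sliceY (contDiff_py hχ) p
  have A5 := sliceY (contDiff_py (contDiff_px hu)) p
  have A6 := sliceY (contDiff_px (contDiff_px hu)) p
  have A7 := sliceY hχhat p
  have B1 := sliceX (contDiff_py hu) p
  have B2 := sliceX (contDiff_py (contDiff_px hu)) p
  have B3 := sliceX hχhat p
  have B4 := sliceX (contDiff_py hχ) p
  have hfunT : pt χhat = fun q => (py u q)⁻¹ *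
      (py u q * px χ q - px u q * py χ q
        + (px u q * py (px u) q - py u q * px (px u) q) * χhat q) := funext hrt
  have hfunX : px χhat = fun q => (py u q)⁻¹ * (py (px u) q * χhat q - py χ q) := funext hrx
  have e1 : py (pt χhat) p =
      -(py (py u) p) / py u p ^ 2 * (py u p * px χ p - px u p * py χ p
          + (px u p * py (px u) p - py u p * px (px u) p) * χhat p)
      + (py u p)⁻¹ * ((py (py u) p * px χ p + py u p * py (px χ) p
            - (py (px u) p * py χ p + px u p * py (py χ) p))
          + ((py (px u) p * py (px u) p + px u p * py (py (px u)) p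
              - (py (py u) p * px (px u) p + py u p * py (px (px u)) p)) * χhat p
            + (px u p * py (px u) p - py u p * px (px u) p) * py χhat p)) := by
    rw [hfunT]
    exact HasDerivAt.deriv ((A1.inv (huy p)).mul
      (((A1.mul A3).sub (A2.mul A4)).add (((A2.mul A5).sub (A1.mul A6)).mul A7)))
  have e2 : py (px χhat) p =
      -(py (py u) p) / py u p ^ 2 * (py (px u) p * χhat p - py χ p)
      + (py u p)⁻¹ * (py (py (px u)) p * χhat p + py (px u) p * py χhat p - py (py χ) p) := by
    rw [hfunX]
    exact HasDerivAt.deriv ((A1.inv (huy p)).mul ((A5.mul A7).sub A4))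
  have e3 : px (px χhat) p =
      -(px (py u) p) / py u p ^ 2 * (py (px u) p * χhat p - py χ p)
      + (py u p)⁻¹ * (px (py (px u)) p * χhat p + py (px u) p * px χhat p - px (py χ) p) := by
    conv_lhs => rw [hfunX]
    exact HasDerivAt.deriv ((B1.inv (huy p)).mul ((B2.mul B3).sub B4))
  rw [e1, e2, e3, px_py_comm hu p, px_py_comm hχ p, px_py_comm (contDiff_px hu) p]
  field_simp [huy p]
  ring
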